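/- Let ν be a finite positive measure on ℝ² and η a finite signed measure supported on a set Ω contained in a disk B = D(x,ρ), with η(Ω) = 0 and dist(Ω, supp ν) unrestricted but dist(supp η, supp ν) ≥ ερ. Then ∫ |Rη| dν ≤ [ (2/(ερ)^s)·ν((M/3)B) + (C/M)·sup_{r>0} ν(D(x,r))/r^s ]·|η|(Ω) for any M ≥ 6, where C depends only on s ∈ (1,2). -/

import Mathlib

/-!
Write `T = ηp(Ω) + ηm(Ω)` and `K(w) = |w|^{-s-1} w`, and split the `ν`-integral at the ball
`B' = D(x, Mρ/3)`. Near `Ω` the separation alone gives `|K(z - y)| ≤ (ερ)^{-s}`, so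
`|Rη(z)| ≤ (ερ)^{-s} T` on the support of `ν`. Off `B'`, since `η` has total mass zero, `K(z - y)`
may be replaced by `K(z - y) - K(z - x)`, which is `O(ρ |z - x|^{-s-1})` because
`|y - x| ≤ ρ ≤ |z - x| / 2`. Finally `∫_{B'ᶜ} |z - x|^{-s-1} dν ≲ G / (Mρ)`, by summing the growth
bound `ν(D(x, r)) ≤ G r^s` over the dyadic annuli around `B'`.
-/

open MeasureTheory Metric Set
open scoped ENNReal

section Kernel

variable {E : Type*} [NormedAddCommGroup E] [NormedSpace ℝ E]

noncomputable def rieszKernel (s : ℝ) (w : E) : E := ‖w‖ ^ (-(s + 1)) • w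

lemma abs_rpow_neg_sub_rpow_neg_le {p r a b : ℝ} (hp : 0 ≤ p) (hr : 0 < r)
    (ha : r ≤ a) (hb : r ≤ b) :
    |a ^ (-p) - b ^ (-p)| ≤ p * r ^ (-p - 1) * |a - b| := by
  have hderiv : ∀ t ∈ Ici r, HasDerivWithinAt (fun t : ℝ ↦ t ^ (-p))
      (-p * t ^ (-p - 1)) (Ici r) t := fun t ht ↦
    (Real.hasDerivAt_rpow_const (Or.inl (hr.trans_le ht).ne')).hasDerivWithinAt
  have hbound : ∀ t ∈ Ici r, ‖-p * t ^ (-p - 1)‖ ≤ p * r ^ (-p - 1) := by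
    intro t ht
    have ht0 : 0 < t := hr.trans_le ht
    rw [norm_mul, norm_neg, Real.norm_of_nonneg hp, Real.norm_of_nonneg (by positivity)]
    exact mul_le_mul_of_nonneg_left (Real.rpow_le_rpow_of_nonpos hr ht (by linarith)) hp
  simpa [Real.norm_eq_abs, abs_sub_comm] using
    (convex_Ici r).norm_image_sub_le_of_norm_hasDerivWithin_le hderiv hbound hb ha

lemma norm_rieszKernel_le {s d : ℝ} (hs : 0 ≤ s) (hd : 0 < d) {w : E} (hw : d ≤ ‖w‖) :
    ‖rieszKernel s w‖ ≤ d ^ (-s) := by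
  have hw0 : 0 < ‖w‖ := hd.trans_le hw
  calc ‖rieszKernel s w‖ = ‖w‖ ^ (-(s + 1)) * ‖w‖ ^ (1 : ℝ) := by
        rw [rieszKernel, norm_smul, Real.norm_of_nonneg (by positivity), Real.rpow_one]
    _ = ‖w‖ ^ (-s) := by rw [← Real.rpow_add hw0]; ring_nf
    _ ≤ d ^ (-s) := Real.rpow_le_rpow_of_nonpos hd hw (by linarith)

lemma norm_rieszKernel_sub_le {s r : ℝ} (hs : -1 ≤ s) (hr : 0 < r) {u v : E}
    (hu : r ≤ ‖u‖) (hv : r ≤ ‖v‖) (hv' : ‖v‖ ≤ 2 * r) :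
    ‖rieszKernel s u - rieszKernel s v‖ ≤ (2 * s + 3) * r ^ (-(s + 1)) * ‖u - v‖ := by
  have hsplit : rieszKernel s u - rieszKernel s v
      = ‖u‖ ^ (-(s + 1)) • (u - v) + (‖u‖ ^ (-(s + 1)) - ‖v‖ ^ (-(s + 1))) • v := by
    rw [rieszKernel, rieszKernel, smul_sub, sub_smul]; abel
  have hfirst : ‖‖u‖ ^ (-(s + 1)) • (u - v)‖ ≤ r ^ (-(s + 1)) * ‖u - v‖ := by
    rw [norm_smul, Real.norm_of_nonneg (by positivity)]
    exact mul_le_mul_of_nonneg_right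
      (Real.rpow_le_rpow_of_nonpos hr hu (by linarith)) (norm_nonneg _)
  have hsecond : ‖(‖u‖ ^ (-(s + 1)) - ‖v‖ ^ (-(s + 1))) • v‖
      ≤ (2 * s + 2) * r ^ (-(s + 1)) * ‖u - v‖ := by
    have hpow : r ^ (-(s + 1) - 1) * r = r ^ (-(s + 1)) := by
      rw [Real.rpow_sub_one hr.ne']; field_simp
    have hlip := abs_rpow_neg_sub_rpow_neg_le (p := s + 1) (by linarith) hr hu hv
    rw [norm_smul, Real.norm_eq_abs]
    calc |‖u‖ ^ (-(s + 1)) - ‖v‖ ^ (-(s + 1))| * ‖v‖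
        ≤ ((s + 1) * r ^ (-(s + 1) - 1) * ‖u - v‖) * (2 * r) := by
          refine mul_le_mul (hlip.trans ?_) hv' (norm_nonneg v)
            (mul_nonneg (mul_nonneg (by linarith) (by positivity)) (norm_nonneg _))
          exact mul_le_mul_of_nonneg_left (abs_norm_sub_norm_le u v)
            (mul_nonneg (by linarith) (by positivity))
      _ = (2 * s + 2) * r ^ (-(s + 1)) * ‖u - v‖ := by rw [← hpow]; ring
  calc ‖rieszKernel s u - rieszKernel s v‖
      ≤ ‖‖u‖ ^ (-(s + 1)) • (u - v)‖ + ‖(‖u‖ ^ (-(s + 1)) - ‖v‖ ^ (-(s + 1))) • v‖ := by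
        rw [hsplit]; exact norm_add_le _ _
    _ ≤ r ^ (-(s + 1)) * ‖u - v‖ + (2 * s + 2) * r ^ (-(s + 1)) * ‖u - v‖ :=
        add_le_add hfirst hsecond
    _ = (2 * s + 3) * r ^ (-(s + 1)) * ‖u - v‖ := by ring

lemma norm_rieszKernel_sub_rieszKernel_le_of_far {s ρ : ℝ} (hs : -1 ≤ s) {x y z : E}
    (hy : ‖y - x‖ ≤ ρ) (hz : 2 * ρ < ‖z - x‖) :
    ‖rieszKernel s (z - y) - rieszKernel s (z - x)‖
      ≤ (2 * s + 3) * 2 ^ (s + 1) * ρ * ‖z - x‖ ^ (-(s + 1)) := by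
  have hzx : 0 < ‖z - x‖ := by linarith [norm_nonneg (y - x)]
  have hzy : ‖z - x‖ / 2 ≤ ‖z - y‖ := by
    have := norm_sub_norm_le (z - x) (y - x)
    rw [sub_sub_sub_cancel_right] at this
    linarith [norm_sub_rev z y]
  have hdiff : ‖(z - y) - (z - x)‖ ≤ ρ := by rwa [sub_sub_sub_cancel_left, norm_sub_rev]
  have hhalf : (‖z - x‖ / 2) ^ (-(s + 1)) = 2 ^ (s + 1) * ‖z - x‖ ^ (-(s + 1)) := by
    rw [Real.div_rpow hzx.le zero_le_two, Real.rpow_neg zero_le_two, div_inv_eq_mul]; ring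
  calc ‖rieszKernel s (z - y) - rieszKernel s (z - x)‖
      ≤ (2 * s + 3) * (‖z - x‖ / 2) ^ (-(s + 1)) * ‖(z - y) - (z - x)‖ :=
        norm_rieszKernel_sub_le hs (by positivity) hzy (by linarith) (by linarith)
    _ ≤ (2 * s + 3) * (‖z - x‖ / 2) ^ (-(s + 1)) * ρ :=
        mul_le_mul_of_nonneg_left hdiff (mul_nonneg (by linarith) (by positivity))
    _ = (2 * s + 3) * 2 ^ (s + 1) * ρ * ‖z - x‖ ^ (-(s + 1)) := by rw [hhalf]; ring

end Kernel

section Transform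

variable {E : Type*} [NormedAddCommGroup E] [NormedSpace ℝ E] [MeasurableSpace E]

noncomputable def rieszTransform (s : ℝ) (μ : Measure E) (z : E) : E :=
  ∫ y, rieszKernel s (z - y) ∂μ

lemma norm_integral_sub_integral_le_of_measure_univ_eq {α F : Type*} [MeasurableSpace α]
    [NormedAddCommGroup F] [NormedSpace ℝ F] [CompleteSpace F]
    {μ₁ μ₂ : Measure α} [IsFiniteMeasure μ₁] [IsFiniteMeasure μ₂] (hμ : μ₁ univ = μ₂ univ)
    {f : α → F} {c : F} {δ : ℝ} (hf₁ : AEStronglyMeasurable f μ₁)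
    (hf₂ : AEStronglyMeasurable f μ₂) (h₁ : ∀ᵐ y ∂μ₁, ‖f y - c‖ ≤ δ)
    (h₂ : ∀ᵐ y ∂μ₂, ‖f y - c‖ ≤ δ) :
    ‖∫ y, f y ∂μ₁ - ∫ y, f y ∂μ₂‖ ≤ δ * (μ₁.real univ + μ₂.real univ) := by
  have hrecenter : ∀ μ : Measure α, [IsFiniteMeasure μ] → AEStronglyMeasurable f μ →
      (∀ᵐ y ∂μ, ‖f y - c‖ ≤ δ) → ∫ y, f y ∂μ = ∫ y, (f y - c) ∂μ + μ.real univ • c := by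
    intro μ _ hf h
    have hint : Integrable (fun y ↦ f y - c) μ :=
      (integrable_const δ).mono' (hf.sub aestronglyMeasurable_const) h
    have hfint : Integrable f μ := by
      simpa only [Pi.add_def, sub_add_cancel] using hint.add (integrable_const c)
    rw [integral_sub hfint (integrable_const c), integral_const, sub_add_cancel]
  have hreal : μ₁.real univ = μ₂.real univ := by rw [measureReal_def, measureReal_def, hμ]
  calc ‖∫ y, f y ∂μ₁ - ∫ y, f y ∂μ₂‖ = ‖∫ y, (f y - c) ∂μ₁ - ∫ y, (f y - c) ∂μ₂‖ := by
        rw [hrecenter μ₁ hf₁ h₁, hrecenter μ₂ hf₂ h₂, hreal, add_sub_add_right_eq_sub]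
    _ ≤ ‖∫ y, (f y - c) ∂μ₁‖ + ‖∫ y, (f y - c) ∂μ₂‖ := norm_sub_le _ _
    _ ≤ δ * μ₁.real univ + δ * μ₂.real univ :=
        add_le_add (norm_integral_le_of_norm_le_const h₁) (norm_integral_le_of_norm_le_const h₂)
    _ = δ * (μ₁.real univ + μ₂.real univ) := by ring

lemma norm_rieszTransform_sub_le {s d : ℝ} (hs : 0 ≤ s) (hd : 0 < d) {μ₁ μ₂ : Measure E}
    [IsFiniteMeasure μ₁] [IsFiniteMeasure μ₂] {z : E} (h₁ : ∀ᵐ y ∂μ₁, d ≤ ‖z - y‖)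
    (h₂ : ∀ᵐ y ∂μ₂, d ≤ ‖z - y‖) :
    ‖rieszTransform s μ₁ z - rieszTransform s μ₂ z‖ ≤ d ^ (-s) * (μ₁.real univ + μ₂.real univ) :=
  calc ‖rieszTransform s μ₁ z - rieszTransform s μ₂ z‖
      ≤ ‖rieszTransform s μ₁ z‖ + ‖rieszTransform s μ₂ z‖ := norm_sub_le _ _
    _ ≤ d ^ (-s) * μ₁.real univ + d ^ (-s) * μ₂.real univ :=
        add_le_add (norm_integral_le_of_norm_le_const (h₁.mono fun _ ↦ norm_rieszKernel_le hs hd))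
          (norm_integral_le_of_norm_le_const (h₂.mono fun _ ↦ norm_rieszKernel_le hs hd))
    _ = d ^ (-s) * (μ₁.real univ + μ₂.real univ) := by ring

lemma norm_rieszTransform_sub_le_of_far [CompleteSpace E] [BorelSpace E]
    [SecondCountableTopology E]
    {s ρ : ℝ} (hs : -1 ≤ s) {μ₁ μ₂ : Measure E} [IsFiniteMeasure μ₁] [IsFiniteMeasure μ₂]
    (hμ : μ₁ univ = μ₂ univ) {x z : E} (h₁ : ∀ᵐ y ∂μ₁, y ∈ closedBall x ρ)
    (h₂ : ∀ᵐ y ∂μ₂, y ∈ closedBall x ρ) (hz : 2 * ρ < ‖z - x‖) :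
    ‖rieszTransform s μ₁ z - rieszTransform s μ₂ z‖
      ≤ (2 * s + 3) * 2 ^ (s + 1) * ρ * ‖z - x‖ ^ (-(s + 1)) * (μ₁.real univ + μ₂.real univ) := by
  have hmeas : Measurable fun y ↦ rieszKernel s (z - y) := by unfold rieszKernel; fun_prop
  have hfar : ∀ y ∈ closedBall x ρ, ‖rieszKernel s (z - y) - rieszKernel s (z - x)‖
      ≤ (2 * s + 3) * 2 ^ (s + 1) * ρ * ‖z - x‖ ^ (-(s + 1)) := fun y hy ↦
    norm_rieszKernel_sub_rieszKernel_le_of_far hs (by rwa [← dist_eq_norm]) hz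
  exact norm_integral_sub_integral_le_of_measure_univ_eq hμ hmeas.aestronglyMeasurable
    hmeas.aestronglyMeasurable (h₁.mono hfar) (h₂.mono hfar)

end Transform

lemma lintegral_compl_closedBall_rpow_neg_le {X : Type*} [PseudoMetricSpace X]
    [MeasurableSpace X] [OpensMeasurableSpace X] {ν : Measure X} {x : X} {s G R : ℝ}
    (hs : -1 ≤ s) (hG : 0 ≤ G) (hR : 0 < R)
    (hball : ∀ r, 0 < r → ν (closedBall x r) ≤ ENNReal.ofReal (G * r ^ s)) :
    ∫⁻ z in (closedBall x R)ᶜ, ENNReal.ofReal (dist z x ^ (-(s + 1))) ∂ν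
      ≤ ENNReal.ofReal (2 ^ (s + 1) * G / R) := by
  set A : ℕ → Set X := fun k ↦ ball x (2 ^ (k + 1) * R) \ ball x (2 ^ k * R)
  set a : ℝ := 2 ^ s * G / R with ha_def
  have hcover : (closedBall x R)ᶜ ⊆ ⋃ k, A k := by
    intro z hz
    have hzR : 1 ≤ dist z x / R := by
      rw [le_div_iff₀ hR, one_mul]; exact (not_le.1 (mt mem_closedBall.2 hz)).le
    obtain ⟨k, hk, hk'⟩ := exists_nat_pow_near hzR one_lt_two
    rw [le_div_iff₀ hR] at hk
    rw [div_lt_iff₀ hR] at hk'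
    exact mem_iUnion.2 ⟨k, mem_ball.2 hk', fun h ↦ (mem_ball.1 h).not_ge hk⟩
  have hannulus : ∀ k : ℕ, ∫⁻ z in A k, ENNReal.ofReal (dist z x ^ (-(s + 1))) ∂ν
      ≤ ENNReal.ofReal (a * (1 / 2) ^ k) := by
    intro k
    have hk : 0 < 2 ^ k * R := by positivity
    have hpow : (2 ^ k * R) ^ (-(s + 1)) * (G * (2 ^ (k + 1) * R) ^ s) = a * (1 / 2) ^ k := by
      rw [ha_def, pow_succ, mul_right_comm, Real.mul_rpow (by positivity) zero_le_two,
        Real.rpow_neg hk.le, Real.rpow_add hk, Real.rpow_one, one_div, inv_pow]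
      field_simp
    calc ∫⁻ z in A k, ENNReal.ofReal (dist z x ^ (-(s + 1))) ∂ν
        ≤ ∫⁻ _ in A k, ENNReal.ofReal ((2 ^ k * R) ^ (-(s + 1))) ∂ν := by
          refine setLIntegral_mono measurable_const fun z hz ↦ ENNReal.ofReal_le_ofReal ?_
          exact Real.rpow_le_rpow_of_nonpos hk (not_lt.1 hz.2) (by linarith)
        _ = ENNReal.ofReal ((2 ^ k * R) ^ (-(s + 1))) * ν (A k) := setLIntegral_const _ _
        _ ≤ ENNReal.ofReal ((2 ^ k * R) ^ (-(s + 1)))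
              * ENNReal.ofReal (G * (2 ^ (k + 1) * R) ^ s) := by
          gcongr
          exact (measure_mono (sdiff_subset.trans ball_subset_closedBall)).trans
            (hball _ (by positivity))
        _ = ENNReal.ofReal (a * (1 / 2) ^ k) := by rw [← ENNReal.ofReal_mul (by positivity), hpow]
  calc ∫⁻ z in (closedBall x R)ᶜ, ENNReal.ofReal (dist z x ^ (-(s + 1))) ∂ν
      ≤ ∑' k, ∫⁻ z in A k, ENNReal.ofReal (dist z x ^ (-(s + 1))) ∂ν :=
        (lintegral_mono_set hcover).trans (lintegral_iUnion_le _ _)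
    _ ≤ ∑' k : ℕ, ENNReal.ofReal (a * (1 / 2) ^ k) := ENNReal.tsum_le_tsum hannulus
    _ = ENNReal.ofReal (∑' k : ℕ, a * (1 / 2) ^ k) :=
        (ENNReal.ofReal_tsum_of_nonneg (fun k ↦ by positivity)
          (summable_geometric_two.mul_left a)).symm
    _ = ENNReal.ofReal (2 ^ (s + 1) * G / R) := by
        rw [tsum_mul_left, tsum_geometric_two, Real.rpow_add_one two_ne_zero, ha_def]
        ring_nf

section Dipole

variable {E : Type*} [NormedAddCommGroup E] [NormedSpace ℝ E] [CompleteSpace E]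
  [MeasurableSpace E] [BorelSpace E] [SecondCountableTopology E]
  {s ρ d G R : ℝ} {ν μ₁ μ₂ : Measure E} [IsFiniteMeasure μ₁] [IsFiniteMeasure μ₂] {x : E}

lemma lintegral_norm_rieszTransform_sub_le (hs : 0 ≤ s) (hρ : 0 < ρ) (hR : 2 * ρ ≤ R)
    (hd : 0 < d) (hG : 0 ≤ G) (hμ : μ₁ univ = μ₂ univ)
    (h₁ : ∀ᵐ y ∂μ₁, y ∈ closedBall x ρ) (h₂ : ∀ᵐ y ∂μ₂, y ∈ closedBall x ρ)
    (hsep : ∀ᵐ z ∂ν, (∀ᵐ y ∂μ₁, d ≤ ‖z - y‖) ∧ ∀ᵐ y ∂μ₂, d ≤ ‖z - y‖)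
    (hball : ∀ r, 0 < r → ν (closedBall x r) ≤ ENNReal.ofReal (G * r ^ s)) :
    ∫⁻ z, ENNReal.ofReal ‖rieszTransform s μ₁ z - rieszTransform s μ₂ z‖ ∂ν
      ≤ ENNReal.ofReal (d ^ (-s) * (μ₁.real univ + μ₂.real univ)) * ν (closedBall x R)
        + ENNReal.ofReal ((2 * s + 3) * 2 ^ (s + 1) * ρ * (μ₁.real univ + μ₂.real univ))
          * ENNReal.ofReal (2 ^ (s + 1) * G / R) := by
  set T := μ₁.real univ + μ₂.real univ
  rw [← lintegral_add_compl _ (measurableSet_closedBall (x := x) (ε := R))]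
  gcongr ?_ + ?_
  · calc _ ≤ ∫⁻ _ in closedBall x R, ENNReal.ofReal (d ^ (-s) * T) ∂ν :=
          setLIntegral_mono_ae aemeasurable_const <| hsep.mono fun z hz _ ↦
            ENNReal.ofReal_le_ofReal (norm_rieszTransform_sub_le hs hd hz.1 hz.2)
      _ = _ := setLIntegral_const _ _
  · have hfar : ∀ z ∈ (closedBall x R)ᶜ, ‖rieszTransform s μ₁ z - rieszTransform s μ₂ z‖
        ≤ (2 * s + 3) * 2 ^ (s + 1) * ρ * T * dist z x ^ (-(s + 1)) := by
      intro z hz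
      have hzx : 2 * ρ < ‖z - x‖ := by
        rw [← dist_eq_norm]; exact hR.trans_lt (not_le.1 (mt mem_closedBall.2 hz))
      rw [dist_eq_norm, mul_right_comm _ T]
      exact norm_rieszTransform_sub_le_of_far (by linarith) hμ h₁ h₂ hzx
    calc _ ≤ ∫⁻ z in (closedBall x R)ᶜ, ENNReal.ofReal ((2 * s + 3) * 2 ^ (s + 1) * ρ * T)
            * ENNReal.ofReal (dist z x ^ (-(s + 1))) ∂ν := by
          refine setLIntegral_mono (by fun_prop) fun z hz ↦ ?_
          rw [← ENNReal.ofReal_mul (by positivity)]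
          exact ENNReal.ofReal_le_ofReal (hfar z hz)
      _ = ENNReal.ofReal ((2 * s + 3) * 2 ^ (s + 1) * ρ * T)
            * ∫⁻ z in (closedBall x R)ᶜ, ENNReal.ofReal (dist z x ^ (-(s + 1))) ∂ν :=
          lintegral_const_mul' _ _ ENNReal.ofReal_ne_top
      _ ≤ _ := by
          gcongr
          exact lintegral_compl_closedBall_rpow_neg_le (by linarith) hG (by linarith) hball

lemma integral_norm_rieszTransform_sub_le [IsFiniteMeasure ν] (hs : 0 ≤ s) (hρ : 0 < ρ)
    (hR : 2 * ρ ≤ R) (hd : 0 < d) (hG : 0 ≤ G) (hμ : μ₁ univ = μ₂ univ)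
    (h₁ : ∀ᵐ y ∂μ₁, y ∈ closedBall x ρ) (h₂ : ∀ᵐ y ∂μ₂, y ∈ closedBall x ρ)
    (hsep : ∀ᵐ z ∂ν, (∀ᵐ y ∂μ₁, d ≤ ‖z - y‖) ∧ ∀ᵐ y ∂μ₂, d ≤ ‖z - y‖)
    (hball : ∀ r, 0 < r → ν (closedBall x r) ≤ ENNReal.ofReal (G * r ^ s)) :
    ∫ z, ‖rieszTransform s μ₁ z - rieszTransform s μ₂ z‖ ∂ν
      ≤ (d ^ (-s) * ν.real (closedBall x R)
          + (2 * s + 3) * 2 ^ (s + 1) * ρ * (2 ^ (s + 1) * G / R))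
        * (μ₁.real univ + μ₂.real univ) := by
  have hR0 : 0 < R := by linarith
  calc ∫ z, ‖rieszTransform s μ₁ z - rieszTransform s μ₂ z‖ ∂ν
      ≤ (∫⁻ z, ENNReal.ofReal ‖‖rieszTransform s μ₁ z - rieszTransform s μ₂ z‖‖ ∂ν).toReal :=
        (Real.le_norm_self _).trans (norm_integral_le_lintegral_norm _)
    _ = (∫⁻ z, ENNReal.ofReal ‖rieszTransform s μ₁ z - rieszTransform s μ₂ z‖ ∂ν).toReal := by
        simp only [norm_norm]
    _ ≤ _ := by
        refine (ENNReal.toReal_mono (by finiteness)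
          (lintegral_norm_rieszTransform_sub_le hs hρ hR hd hG hμ h₁ h₂ hsep hball)).trans_eq ?_
        rw [ENNReal.toReal_add (by finiteness) (by finiteness), ENNReal.toReal_mul,
          ENNReal.toReal_mul, ENNReal.toReal_ofReal (by positivity),
          ENNReal.toReal_ofReal (by positivity), ENNReal.toReal_ofReal (by positivity),
          ← measureReal_def]
        ring

end Dipole

/-- Dual form of the oscillation bound. Let `ν` be a finite positive measure
supported on `sν`, and `η = ηp - ηm` a finite signed measure supported on `Ω ⊆ B = D(x,ρ)`
with `η(Ω) = 0` and `dist(supp η, supp ν) ≥ ε ρ`. Then for `M ≥ 6`, `s ∈ (1,2)`, and any `G`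
with `ν(D(x,r)) ≤ G r^s` for all `r > 0`,
`∫ |Rη| dν ≤ [2/(ερ)^s · ν((M/3)B) + (C/M) · G] · |η|(Ω)` with `C = C(s)`. -/
theorem stmt11 (s : ℝ) (hs : 1 < s ∧ s < 2) :
    ∃ C > 0, ∀ (ν ηp ηm : Measure (EuclideanSpace ℝ (Fin 2))),
      IsFiniteMeasure ν → IsFiniteMeasure ηp → IsFiniteMeasure ηm →
      ∀ (sν Ω : Set (EuclideanSpace ℝ (Fin 2))) (x : EuclideanSpace ℝ (Fin 2)) (ρ ε M G : ℝ),
      0 < ρ → 0 < ε → ε < 1 → 6 ≤ M →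
      Ω ⊆ Metric.closedBall x ρ →
      ηp Ωᶜ = 0 → ηm Ωᶜ = 0 → ηp Ω = ηm Ω →
      ν sνᶜ = 0 →
      (∀ y ∈ Ω, ∀ z ∈ sν, ε * ρ ≤ dist y z) →
      (∀ r : ℝ, 0 < r → (ν (Metric.closedBall x r)).toReal ≤ G * r ^ s) →
      ∫ z, ‖(∫ y, ‖z - y‖ ^ (-(s + 1)) • (z - y) ∂ηp)
              - ∫ y, ‖z - y‖ ^ (-(s + 1)) • (z - y) ∂ηm‖ ∂ν
        ≤ (2 / (ε * ρ) ^ s * (ν (Metric.closedBall x (M / 3 * ρ))).toReal + C / M * G)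
            * ((ηp + ηm) Ω).toReal := by
  refine ⟨3 * 2 ^ (s + 1) * ((2 * s + 3) * 2 ^ (s + 1)),
    mul_pos (by positivity) (mul_pos (by linarith) (by positivity)), ?_⟩
  intro ν ηp ηm _ _ _ sν Ω x ρ ε M G hρ hε _ hM hΩ hηp hηm hbal hν hdist hG
  have hG0 : 0 ≤ G := by simpa using ENNReal.toReal_nonneg.trans (hG 1 one_pos)
  have hball : ∀ r, 0 < r → ν (closedBall x r) ≤ ENNReal.ofReal (G * r ^ s) := fun r hr ↦
    (ENNReal.le_ofReal_iff_toReal_le (measure_ne_top _ _) (by positivity)).2 (hG r hr)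
  have hηp_univ := measure_congr (ae_eq_univ.2 hηp)
  have hηm_univ := measure_congr (ae_eq_univ.2 hηm)
  have hsep : ∀ᵐ z ∂ν, (∀ᵐ y ∂ηp, ε * ρ ≤ ‖z - y‖) ∧ ∀ᵐ y ∂ηm, ε * ρ ≤ ‖z - y‖ := by
    filter_upwards [ae_iff.2 hν] with z hz
    have hzΩ : ∀ y ∈ Ω, ε * ρ ≤ ‖z - y‖ := fun y hy ↦ by
      rw [← dist_eq_norm, dist_comm]; exact hdist y hy z hz
    exact ⟨(ae_iff.2 hηp).mono hzΩ, (ae_iff.2 hηm).mono hzΩ⟩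
  have hmain := integral_norm_rieszTransform_sub_le (by linarith) hρ
    (R := M / 3 * ρ) (by nlinarith) (mul_pos hε hρ) hG0 (by rw [← hηp_univ, ← hηm_univ, hbal])
    ((ae_iff.2 hηp).mono fun y hy ↦ hΩ hy) ((ae_iff.2 hηm).mono fun y hy ↦ hΩ hy) hsep hball
  rw [Measure.add_apply, hηp_univ, hηm_univ,
    ENNReal.toReal_add (measure_ne_top _ _) (measure_ne_top _ _)]
  -- `rieszTransform s η z` unfolds to the inner integrals of the goal
  refine hmain.trans (mul_le_mul_of_nonneg_right ?_ (by positivity))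
  have hnear_coeff : (ε * ρ) ^ (-s) ≤ 2 / (ε * ρ) ^ s := by
    rw [Real.rpow_neg (by positivity), inv_eq_one_div]
    gcongr
    norm_num
  have hfar_coeff : (2 * s + 3) * 2 ^ (s + 1) * ρ * (2 ^ (s + 1) * G / (M / 3 * ρ))
      = 3 * 2 ^ (s + 1) * ((2 * s + 3) * 2 ^ (s + 1)) / M * G := by
    field_simp
  rw [hfar_coeff, measureReal_def]
  gcongr
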